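/- Fix k ∈ ℕ with k ≥ 2. Let A ⊆ B be finite sets, let S_B be a (k+1)-uniform hypergraph on B satisfying condition (†), let S_A = {e ∈ S_B : e ⊆ A} be its restriction to A, and let R_A be a k-uniform hypergraph on A with K(R_A) = S_A. Then there exists a k-uniform hypergraph R_B on B such that K(R_B) = S_B and {e ∈ R_B : e ⊆ A} = R_A. -/

import Mathlib

variable {α : Type*} [DecidableEq α]

/-- `R` is a `k`-uniform hypergraph on the vertex set `V`. -/
def IsHypergraph (k : ℕ) (V : Finset α) (R : Set (Finset α)) : Prop :=
  ∀ e ∈ R, e ⊆ V ∧ e.card = k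

/-- The Kay-graph of a `k`-uniform hypergraph `R` on `V`: the `(k+1)`-uniform hypergraph
on `V` whose hyperedges are the `(k+1)`-element subsets `A` of `V` such that the number of
`k`-element subsets of `A` belonging to `R` is congruent to `k + 1` modulo `2`. -/
def kay (k : ℕ) (V : Finset α) (R : Set (Finset α)) : Set (Finset α) :=
  {A | A ⊆ V ∧ A.card = k + 1 ∧
    {e : Finset α | e ⊆ A ∧ e.card = k ∧ e ∈ R}.ncard % 2 = (k + 1) % 2}

/-- Condition (†) for a `(k+1)`-uniform hypergraph `S` on `V`: for every `(k+2)`-element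
subset `W` of `V`, the number of `(k+1)`-element subsets of `W` belonging to `S` is
congruent to `k` modulo `2`. -/
def dagger (k : ℕ) (V : Finset α) (S : Set (Finset α)) : Prop :=
  ∀ W : Finset α, W ⊆ V → W.card = k + 2 →
    {A : Finset α | A ⊆ W ∧ A.card = k + 1 ∧ A ∈ S}.ncard % 2 = k % 2

/-!
Encode hypergraphs by their indicators in `ZMod 2` and let `δf(e) = ∑_{b ∈ e} f(e \ {b})`.
With `σ = 1_S + k`, the equation `K(R) = S` on `V` says `δ 1_R = σ` on the `(k+1)`-subsets of
`V`, and (†) says `δσ = 0` on the `(k+2)`-subsets of `B`. Coning from a vertex `a` is a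
contracting homotopy, `δ (cone a f) + cone a (δf) = f`, so
`ρ = 1_{R_A} + cone a (σ + δ 1_{R_A})` satisfies `δρ = σ` on `B`. For `a ∈ A` the cone term
vanishes on the subsets of `A`, because `σ = δ 1_{R_A}` there; so `ρ` is the indicator of the
required extension `R_B`.
-/

open Finset

theorem Finset.exists_erase_eq_of_card_add_one {e W : Finset α} (he : e ⊆ W)
    (hcard : e.card + 1 = W.card) : ∃ b ∈ W, W.erase b = e :=
  covBy_iff_exists_erase.1 <| covBy_iff_card_sdiff_eq_one.2
    ⟨he, by rw [card_sdiff_of_subset he]; omega⟩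

namespace FinsetCochain

variable {M : Type*}

def coboundary [AddCommMonoid M] (f : Finset α → M) (e : Finset α) : M :=
  ∑ b ∈ e, f (e.erase b)

def cone [Zero M] (a : α) (f : Finset α → M) (g : Finset α) : M :=
  if a ∈ g then 0 else f (insert a g)

lemma cone_apply_eq_zero [Zero M] {a : α} {f : Finset α → M} {g : Finset α}
    (h : a ∉ g → f (insert a g) = 0) : cone a f g = 0 := by
  unfold cone
  split_ifs with ha
  exacts [rfl, h ha]

lemma coboundary_add [AddCommMonoid M] (f g : Finset α → M) :
    coboundary (f + g) = coboundary f + coboundary g := by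
  ext e
  simp [coboundary, sum_add_distrib]

lemma coboundary_const [AddCommMonoid M] (c : M) (e : Finset α) :
    coboundary (fun _ ↦ c) e = e.card • c := by
  simp [coboundary]

lemma ncard_facets_mem_eq_coboundary [AddCommMonoidWithOne M] {W : Finset α} {m : ℕ}
    (hW : W.card = m + 1) (S : Set (Finset α)) :
    ({e | e ⊆ W ∧ e.card = m ∧ e ∈ S}.ncard : M) = coboundary (S.indicator 1) W := by
  classical
  have hfacets : {e | e ⊆ W ∧ e.card = m ∧ e ∈ S}
      = ↑((W.filter fun b ↦ W.erase b ∈ S).image W.erase) := by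
    ext e
    simp only [coe_image, coe_filter, Set.mem_image, Set.mem_ofPred_eq]
    constructor
    · rintro ⟨he, hcard, heS⟩
      obtain ⟨b, hb, rfl⟩ := exists_erase_eq_of_card_add_one he (by omega)
      exact ⟨b, ⟨hb, heS⟩, rfl⟩
    · rintro ⟨b, ⟨hb, hbS⟩, rfl⟩
      exact ⟨erase_subset b W, by rw [card_erase_of_mem hb, hW]; rfl, hbS⟩
  rw [hfacets, Set.ncard_coe_finset,
    card_image_of_injOn ((erase_injOn W).mono (filter_subset _ _)), card_filter, Nat.cast_sum,
    coboundary]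
  refine sum_congr rfl fun b _ ↦ ?_
  simp [Set.indicator_apply]

section CharTwo

variable {R : Type*} [Ring R] [CharP R 2]

lemma coboundary_coboundary (f : Finset α → R) : coboundary (coboundary f) = 0 := by
  ext e
  simp only [coboundary, Pi.zero_apply]
  rw [sum_sigma']
  refine sum_involution (fun p _ ↦ ⟨p.2, p.1⟩) ?_ ?_ ?_ ?_
  · rintro ⟨b, c⟩ _
    rw [erase_right_comm, CharTwo.add_self_eq_zero]
  · rintro ⟨b, c⟩ hbc _ h
    simp only [mem_sigma, mem_erase] at hbc
    exact hbc.2.1 (Sigma.mk.inj h).1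
  · rintro ⟨b, c⟩ hbc
    simp only [mem_sigma, mem_erase] at hbc ⊢
    exact ⟨hbc.2.2, Ne.symm hbc.2.1, hbc.1⟩
  · rintro ⟨b, c⟩ _
    rfl

lemma coboundary_cone (a : α) (f : Finset α → R) (g : Finset α) :
    coboundary (cone a f) g = f g + cone a (coboundary f) g := by
  by_cases ha : a ∈ g
  · rw [coboundary, sum_eq_single_of_mem a ha fun b _ hba ↦ ?_]
    · simp [cone, ha]
    · simp [cone, hba.symm, ha]
  · have hfacet : ∀ b ∈ g, cone a f (g.erase b) = f ((insert a g).erase b) := fun b hb ↦ by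
      rw [cone, if_neg fun h ↦ ha (mem_of_mem_erase h),
        erase_insert_of_ne (ne_of_mem_of_not_mem hb ha).symm]
    rw [coboundary, sum_congr rfl hfacet, cone, if_neg ha, coboundary, sum_insert ha,
      erase_insert ha, ← add_assoc, CharTwo.add_self_eq_zero, zero_add]

lemma coboundary_add_cone (a : α) (r σ : Finset α → R) (g : Finset α) :
    coboundary (r + cone a (σ + coboundary r)) g = σ g + cone a (coboundary σ) g := by
  rw [coboundary_add, Pi.add_apply, coboundary_cone, coboundary_add, coboundary_coboundary,
    add_zero, Pi.add_apply, add_comm (σ g), add_assoc, ← add_assoc (coboundary r g),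
    CharTwo.add_self_eq_zero, zero_add]

theorem exists_coboundary_eq_extending {k : ℕ} (hk : k ≠ 0) {A B : Finset α} (hAB : A ⊆ B)
    {σ r : Finset α → R} (hσ : ∀ W ⊆ B, W.card = k + 2 → coboundary σ W = 0)
    (hr : ∀ h ⊆ A, h.card = k + 1 → coboundary r h = σ h) :
    ∃ ρ : Finset α → R, (∀ h ⊆ B, h.card = k + 1 → coboundary ρ h = σ h) ∧
      ∀ g ⊆ A, g.card = k → ρ g = r g := by
  obtain rfl | ⟨a, haB, haA⟩ : B = ∅ ∨ ∃ a ∈ B, a ∈ A ∨ A = ∅ := by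
    rcases A.eq_empty_or_nonempty with rfl | ⟨a, ha⟩
    · rcases B.eq_empty_or_nonempty with rfl | ⟨a, ha⟩
      exacts [Or.inl rfl, Or.inr ⟨a, ha, Or.inr rfl⟩]
    · exact Or.inr ⟨a, hAB ha, Or.inl ha⟩
  · refine ⟨r, fun h hh hcard ↦ ?_, fun _ _ _ ↦ rfl⟩
    simp [subset_empty.1 hh] at hcard
  refine ⟨r + cone a (σ + coboundary r), fun h hh hcard ↦ ?_, fun g hg hcard ↦ ?_⟩
  · rw [coboundary_add_cone, add_eq_left]
    exact cone_apply_eq_zero fun ha ↦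
      hσ _ (insert_subset haB hh) (by rw [card_insert_of_notMem ha, hcard])
  · rw [Pi.add_apply, add_eq_left]
    refine cone_apply_eq_zero fun ha ↦ ?_
    obtain haA | rfl := haA
    · rw [Pi.add_apply, ← hr _ (insert_subset haA hg) (by rw [card_insert_of_notMem ha, hcard]),
        CharTwo.add_self_eq_zero]
    · exact absurd (hcard.symm.trans (card_eq_zero.2 (subset_empty.1 hg))) hk

end CharTwo

end FinsetCochain

open FinsetCochain

noncomputable def kayCochain (k : ℕ) (S : Set (Finset α)) : Finset α → ZMod 2 :=
  S.indicator 1 + fun _ ↦ (k : ZMod 2)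

def hypergraphOf (k : ℕ) (V : Finset α) (f : Finset α → ZMod 2) : Set (Finset α) :=
  {g | g ⊆ V ∧ g.card = k ∧ f g = 1}

section KayGraph

variable {k : ℕ} {V : Finset α}

lemma mem_kay_iff {R : Set (Finset α)} {h : Finset α} :
    h ∈ kay k V R ↔
      h ⊆ V ∧ h.card = k + 1 ∧ coboundary (R.indicator 1) h = (k + 1 : ZMod 2) := by
  refine and_congr_right fun _ ↦ and_congr_right fun hcard ↦ ?_
  rw [← ncard_facets_mem_eq_coboundary hcard, ← ZMod.natCast_eq_natCast_iff']
  push_cast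
  rfl

lemma kay_eq_iff {R S : Set (Finset α)} (hS : ∀ e ∈ S, e.card = k + 1) :
    kay k V R = {e | e ∈ S ∧ e ⊆ V} ↔
      ∀ h ⊆ V, h.card = k + 1 → coboundary (R.indicator 1) h = kayCochain k S h := by
  have key : ∀ h ⊆ V, h.card = k + 1 →
      ((h ∈ kay k V R ↔ h ∈ S) ↔ coboundary (R.indicator 1) h = kayCochain k S h) := by
    classical
    intro h hV hcard
    rw [mem_kay_iff, kayCochain, Pi.add_apply, Set.indicator_apply, Pi.one_apply]
    simp only [hV, hcard, true_and]
    generalize coboundary (R.indicator (1 : Finset α → ZMod 2)) h = x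
    generalize (k : ZMod 2) = y
    by_cases hS : h ∈ S <;> simp only [hS, if_true, if_false] <;> revert x y <;> decide
  rw [Set.ext_iff]
  refine ⟨fun hkay h hV hcard ↦ (key h hV hcard).1 (by simpa [hV] using hkay h),
    fun hδ h ↦ ?_⟩
  by_cases hh : h ⊆ V ∧ h.card = k + 1
  · simpa [hh.1] using (key h hh.1 hh.2).2 (hδ h hh.1 hh.2)
  · simp only [mem_kay_iff, Set.mem_ofPred_eq]
    grind

lemma dagger_iff {S : Set (Finset α)} :
    dagger k V S ↔ ∀ W ⊆ V, W.card = k + 2 → coboundary (kayCochain k S) W = 0 := by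
  refine forall₂_congr fun W _ ↦ forall_congr' fun hcard ↦ ?_
  rw [← ZMod.natCast_eq_natCast_iff', ncard_facets_mem_eq_coboundary hcard, kayCochain,
    coboundary_add, Pi.add_apply, coboundary_const, hcard, nsmul_eq_mul]
  push_cast
  generalize coboundary (S.indicator (1 : Finset α → ZMod 2)) W = x
  generalize (k : ZMod 2) = y
  revert x y
  decide

lemma indicator_hypergraphOf {f : Finset α → ZMod 2} {g : Finset α} (hg : g ⊆ V)
    (hcard : g.card = k) : (hypergraphOf k V f).indicator (1 : Finset α → ZMod 2) g = f g := by
  simp only [Set.indicator_apply, hypergraphOf, Set.mem_ofPred_eq, hg, hcard, true_and,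
    Pi.one_apply]
  generalize f g = x
  revert x
  decide

lemma coboundary_indicator_hypergraphOf {f : Finset α → ZMod 2} {h : Finset α} (hh : h ⊆ V)
    (hcard : h.card = k + 1) :
    coboundary ((hypergraphOf k V f).indicator 1) h = coboundary f h :=
  sum_congr rfl fun b hb ↦ indicator_hypergraphOf ((erase_subset b h).trans hh)
    (by rw [card_erase_of_mem hb, hcard]; rfl)

end KayGraph

/-- If `S_B` is a `(k+1)`-uniform hypergraph on `B` satisfying (†), `A ⊆ B`, and `R_A` is
a `k`-uniform hypergraph on `A` whose Kay-graph is the restriction of `S_B` to `A`, then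
`R_A` extends to a `k`-uniform hypergraph `R_B` on `B` whose Kay-graph is `S_B`. -/
theorem kay_preimage_extension (k : ℕ) (hk : 2 ≤ k) (A B : Finset α) (hAB : A ⊆ B)
    (S_B : Set (Finset α)) (hS : IsHypergraph (k + 1) B S_B) (hdag : dagger k B S_B)
    (R_A : Set (Finset α)) (hR_A : IsHypergraph k A R_A)
    (hkayA : kay k A R_A = {e : Finset α | e ∈ S_B ∧ e ⊆ A}) :
    ∃ R_B : Set (Finset α), IsHypergraph k B R_B ∧ kay k B R_B = S_B ∧
      {e : Finset α | e ∈ R_B ∧ e ⊆ A} = R_A := by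
  have hS_card : ∀ e ∈ S_B, e.card = k + 1 := fun e he ↦ (hS e he).2
  obtain ⟨ρ, hρB, hρA⟩ := exists_coboundary_eq_extending (by omega) hAB (dagger_iff.1 hdag)
    ((kay_eq_iff hS_card).1 hkayA)
  refine ⟨hypergraphOf k B ρ, fun _ he ↦ ⟨he.1, he.2.1⟩, ?_, ?_⟩
  · rw [← Set.sep_eq_self_iff_mem_true.2 fun e he ↦ (hS e he).1, kay_eq_iff hS_card]
    intro h hh hcard
    rw [coboundary_indicator_hypergraphOf hh hcard, hρB h hh hcard]
  · ext e
    constructor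
    · rintro ⟨⟨-, hcard, hρe⟩, heA⟩
      rwa [hρA e heA hcard, Set.indicator_eq_one_iff_mem] at hρe
    · intro he
      obtain ⟨heA, hcard⟩ := hR_A e he
      refine ⟨⟨heA.trans hAB, hcard, ?_⟩, heA⟩
      rwa [hρA e heA hcard, Set.indicator_eq_one_iff_mem]
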